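/- arXiv:1201.4780 — 6 statements merged into one kernel-verified Lean document; each statement's English description precedes it below -/
import Mathlib

section
/- For every real number k, the 2×2 complex matrix M_k = (1/√2)·[[−e^{−ik}, e^{−ik}], [e^{ik}, e^{ik}]] has exactly the eigenvalues e^{iω_k} and e^{i(π−ω_k)}, where ω_k = arcsin((sin k)/√2) ∈ [−π/2, π/2]. -/
/-! A 2×2 matrix has as eigenvalues the two roots of `μ² - (tr) μ + det`. Here `det = -1` and
`tr = i √2 sin k`, while `e^{iω}` and `e^{i(π - ω)} = -e^{-iω}` have product `-1` and sum
`2i sin ω = i √2 sin k`. -/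

/-- The Fourier-transformed one-step evolution matrix of the Hadamard walk. -/
noncomputable def hadamardWalkFourierMatrix (k : ℝ) : Matrix (Fin 2) (Fin 2) ℂ :=
  ((Real.sqrt 2 : ℂ))⁻¹ •
    !![-Complex.exp (-(k : ℂ) * Complex.I), Complex.exp (-(k : ℂ) * Complex.I);
       Complex.exp ((k : ℂ) * Complex.I), Complex.exp ((k : ℂ) * Complex.I)]

open Complex

theorem Matrix.det_algebraMap_sub_fin_two {R : Type*} [CommRing R] (A : Matrix (Fin 2) (Fin 2) R)
    (μ : R) : (algebraMap R _ μ - A).det = μ ^ 2 - A.trace * μ + A.det := by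
  simp only [Matrix.det_fin_two, Matrix.trace_fin_two, Matrix.sub_apply,
    Matrix.algebraMap_matrix_apply, Algebra.algebraMap_self, RingHom.id_apply, Fin.isValue,
    if_true, zero_ne_one, one_ne_zero, if_false]
  ring

theorem Matrix.spectrum_fin_two_eq_pair {K : Type*} [Field K] {A : Matrix (Fin 2) (Fin 2) K}
    {a b : K} (hsum : a + b = A.trace) (hprod : a * b = A.det) : spectrum K A = {a, b} := by
  ext μ
  have hfactor : (algebraMap K _ μ - A).det = (μ - a) * (μ - b) := by
    rw [Matrix.det_algebraMap_sub_fin_two, ← hsum, ← hprod]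
    ring
  simp only [spectrum.mem_iff, Matrix.isUnit_iff_isUnit_det, isUnit_iff_ne_zero, not_not,
    hfactor, mul_eq_zero, sub_eq_zero, Set.mem_insert_iff, Set.mem_singleton_iff]

theorem Complex.exp_mul_I_mul_exp_pi_sub_mul_I (x : ℂ) :
    exp (x * I) * exp ((Real.pi - x) * I) = -1 := by
  rw [← exp_add, ← add_mul, add_sub_cancel, exp_pi_mul_I]

theorem Complex.exp_mul_I_add_exp_pi_sub_mul_I (x : ℂ) :
    exp (x * I) + exp ((Real.pi - x) * I) = 2 * sin x * I := by
  rw [sub_mul, sub_eq_add_neg, exp_add, exp_pi_mul_I, ← neg_mul, exp_mul_I, exp_mul_I, cos_neg,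
    sin_neg]
  ring

theorem Real.sin_arcsin_sin_div {c : ℝ} (hc : 1 ≤ c) (x : ℝ) :
    Real.sin (Real.arcsin (Real.sin x / c)) = Real.sin x / c := by
  have hpos : 0 < c := by linarith
  refine Real.sin_arcsin ?_ ?_
  · rw [le_div_iff₀ hpos]
    nlinarith [Real.neg_one_le_sin x]
  · rw [div_le_one hpos]
    linarith [Real.sin_le_one x]

theorem Complex.ofReal_sqrt_two_sq : (Real.sqrt 2 : ℂ) ^ 2 = 2 := by
  rw [← ofReal_pow, Real.sq_sqrt zero_le_two, ofReal_ofNat]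

theorem Complex.ofReal_sqrt_two_ne_zero : (Real.sqrt 2 : ℂ) ≠ 0 :=
  ofReal_ne_zero.mpr (Real.sqrt_pos.mpr two_pos).ne'

theorem trace_hadamardWalkFourierMatrix (k : ℝ) :
    (hadamardWalkFourierMatrix k).trace = Real.sqrt 2 * Real.sin k * I := by
  rw [Matrix.trace_fin_two, hadamardWalkFourierMatrix]
  simp only [Matrix.smul_apply, Matrix.of_apply, Matrix.cons_val', Matrix.cons_val_zero,
    Matrix.cons_val_one, Matrix.empty_val', Matrix.cons_val_fin_one, smul_eq_mul]
  rw [exp_mul_I, exp_mul_I, cos_neg, sin_neg, ← ofReal_sin]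
  field_simp [ofReal_sqrt_two_ne_zero]
  linear_combination -(Real.sin k : ℂ) * I * ofReal_sqrt_two_sq

theorem det_hadamardWalkFourierMatrix (k : ℝ) :
    (hadamardWalkFourierMatrix k).det = -1 := by
  have hunit : exp (-((k : ℂ) * I)) * exp ((k : ℂ) * I) = 1 := by
    rw [← exp_add, neg_add_cancel, exp_zero]
  rw [hadamardWalkFourierMatrix, Matrix.det_smul, Matrix.det_fin_two_of, Fintype.card_fin,
    neg_mul]
  field_simp [ofReal_sqrt_two_ne_zero]
  linear_combination -2 * hunit + ofReal_sqrt_two_sq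

theorem eigenvalues_hadamardWalkFourierMatrix (k : ℝ) :
    spectrum ℂ (hadamardWalkFourierMatrix k) =
      {Complex.exp ((Real.arcsin (Real.sin k / Real.sqrt 2) : ℂ) * Complex.I),
       Complex.exp (((Real.pi : ℂ) - (Real.arcsin (Real.sin k / Real.sqrt 2) : ℂ)) * Complex.I)} := by
  refine Matrix.spectrum_fin_two_eq_pair ?_ ?_
  · rw [exp_mul_I_add_exp_pi_sub_mul_I, trace_hadamardWalkFourierMatrix,
      ← ofReal_sin (Real.arcsin _), Real.sin_arcsin_sin_div (Real.one_le_sqrt.mpr one_le_two),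
      ofReal_div]
    field_simp [ofReal_sqrt_two_ne_zero]
    linear_combination -(Real.sin k : ℂ) * ofReal_sqrt_two_sq
  · rw [exp_mul_I_mul_exp_pi_sub_mul_I, det_hadamardWalkFourierMatrix]
end

section
/- For the Hadamard walk on the integer line, for every t ∈ ℕ with t ≥ 1 and every integer n with −t ≤ n < t and t − n even, setting l = (t−n)/2 (so 1 ≤ l ≤ t), the amplitudes are given by the path-counting formulas Ψ_L(n,t) = 2^{−t/2} · Σ_{k∈ℤ} C(l−1,k)·C(t−l,k)·(−1)^{l−k−1} and Ψ_R(n,t) = 2^{−t/2} · Σ_{k∈ℤ} C(l−1,k−1)·C(t−l,k)·(−1)^{l−k}, where C(m,j) denotes the binomial coefficient, with the convention C(m,j) = 0 unless 0 ≤ j ≤ m. -/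
/-- The Hadamard walk on the integer line: `hadamardWalk t n = (Ψ_L(n,t), Ψ_R(n,t))`. -/
noncomputable def hadamardWalk : ℕ → ℤ → ℂ × ℂ
  | 0, n => if n = 0 then (0, 1) else (0, 0)
  | t + 1, n =>
      (((hadamardWalk t (n + 1)).2 - (hadamardWalk t (n + 1)).1) / (Real.sqrt 2 : ℂ),
       ((hadamardWalk t (n - 1)).2 + (hadamardWalk t (n - 1)).1) / (Real.sqrt 2 : ℂ))

/-- Binomial coefficient `C(m,j)` for integer arguments, with the convention that
`C(m,j) = 0` unless `0 ≤ j ≤ m`. -/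
noncomputable def intChoose (m j : ℤ) : ℂ :=
  if 0 ≤ j ∧ j ≤ m then (Nat.choose m.toNat j.toNat : ℂ) else 0

/-!
In the coordinates `a = l - 1`, `b = t - l` (time `a + b + 1`, position `b - a - 1`) the walk,
rescaled by `√2 ^ t`, becomes a recursion on the quadrant `ℕ × ℕ`:
`Ψ_L(a + 1, b) = Ψ_R(a, b) - Ψ_L(a, b)` and `Ψ_R(a, b + 1) = Ψ_R(a, b) + Ψ_L(a, b)`, with boundary
values `Ψ_L(0, b) = 1`, fed by the site `n = t` where `Ψ = (0, 2^(-t/2))`, and `Ψ_R(a, 0) = 0`,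
fed from outside the light cone. By Pascal's rule the two binomial sums satisfy the same
recursion with the same boundary values.
-/

open Finset

/-- The sums of the theorem in the coordinates `a`, `b`, indexed by `j = k` (resp. `j = k - 1`);
`(-1) ^ (a + j)` has the parity of `(-1) ^ (a - j)`. -/
noncomputable def pathSumL (a b : ℕ) : ℂ :=
  ∑ j ∈ range (a + 1), (-1) ^ (a + j) * (a.choose j * b.choose j)

noncomputable def pathSumR (a b : ℕ) : ℂ :=
  ∑ j ∈ range (a + 1), (-1) ^ (a + j) * (a.choose j * b.choose (j + 1))

lemma sum_range_mul_choose_mul_of_lt {R : Type*} [Semiring R] {a N : ℕ} (h : a < N)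
    (f g : ℕ → R) :
    ∑ j ∈ range N, f j * (a.choose j * g j) = ∑ j ∈ range (a + 1), f j * (a.choose j * g j) :=
  (sum_subset (range_subset_range.2 h) fun j _ hj => by
    simp [Nat.choose_eq_zero_of_lt (not_lt.1 (mt mem_range.2 hj))]).symm

@[simp] lemma pathSumL_zero_left (b : ℕ) : pathSumL 0 b = 1 := by simp [pathSumL]

@[simp] lemma pathSumR_zero_right (a : ℕ) : pathSumR a 0 = 0 := by simp [pathSumR]

lemma pathSumR_succ_right (a b : ℕ) : pathSumR a (b + 1) = pathSumR a b + pathSumL a b := by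
  simp only [pathSumR, pathSumL, ← sum_add_distrib, Nat.choose_succ_succ', Nat.cast_add]
  refine sum_congr rfl fun j _ => by ring

lemma pathSumL_succ_left (a b : ℕ) : pathSumL (a + 1) b = pathSumR a b - pathSumL a b := by
  have hL : pathSumL a b = ∑ j ∈ range (a + 2), (-1 : ℂ) ^ (a + j) * (a.choose j * b.choose j) :=
    (sum_range_mul_choose_mul_of_lt (by omega) _ _).symm
  rw [hL, pathSumL, sum_range_succ', sum_range_succ' _ (a + 1), pathSumR, sub_eq_add_neg,
    neg_add, ← sum_neg_distrib, ← add_assoc, ← sum_add_distrib]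
  simp only [Nat.choose_succ_succ', Nat.cast_add, pow_succ, add_zero, Nat.choose_zero_right]
  congr 1
  · exact sum_congr rfl fun j _ => by ring
  · ring

lemma hadamardWalk_eq_zero_of_lt_abs {t : ℕ} {n : ℤ} (h : (t : ℤ) < |n|) :
    hadamardWalk t n = 0 := by
  induction t generalizing n with
  | zero => exact if_neg (abs_pos.1 (by simpa using h))
  | succ t ih =>
    rw [lt_abs] at h
    rw [hadamardWalk, ih (lt_abs.2 (by omega)), ih (lt_abs.2 (by omega))]
    simp

lemma hadamardWalk_self (t : ℕ) : hadamardWalk t t = (0, 1 / (√2 : ℂ) ^ t) := by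
  induction t with
  | zero => simp [hadamardWalk]
  | succ t ih =>
    rw [hadamardWalk, hadamardWalk_eq_zero_of_lt_abs (lt_abs.2 (.inl (by omega))),
      show ((t + 1 : ℕ) : ℤ) - 1 = t by omega, ih, pow_succ]
    simp [div_eq_mul_inv, mul_comm]

noncomputable def latticeWalk (a b : ℕ) : ℂ × ℂ := hadamardWalk (a + b + 1) ((b : ℤ) - a - 1)

lemma latticeWalk_zero_left_fst (b : ℕ) : (latticeWalk 0 b).1 = 1 / (√2 : ℂ) ^ (b + 1) := by
  rw [latticeWalk, zero_add, hadamardWalk, show (b : ℤ) - (0 : ℕ) - 1 + 1 = b by omega,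
    hadamardWalk_self, pow_succ]
  simp [div_eq_mul_inv, mul_comm]

lemma latticeWalk_zero_right_snd (a : ℕ) : (latticeWalk a 0).2 = 0 := by
  rw [latticeWalk, hadamardWalk, hadamardWalk_eq_zero_of_lt_abs (n := ((0 : ℕ) : ℤ) - a - 1 - 1)
    (lt_abs.2 (.inr (by omega)))]
  simp

lemma latticeWalk_succ_left_fst (a b : ℕ) :
    (latticeWalk (a + 1) b).1 = ((latticeWalk a b).2 - (latticeWalk a b).1) / (√2 : ℂ) := by
  rw [latticeWalk, show a + 1 + b + 1 = a + b + 1 + 1 by omega, hadamardWalk,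
    show (b : ℤ) - (a + 1 : ℕ) - 1 + 1 = b - a - 1 by omega, latticeWalk]

lemma latticeWalk_succ_right_snd (a b : ℕ) :
    (latticeWalk a (b + 1)).2 = ((latticeWalk a b).2 + (latticeWalk a b).1) / (√2 : ℂ) := by
  rw [latticeWalk, show a + (b + 1) + 1 = a + b + 1 + 1 by omega, hadamardWalk,
    show ((b + 1 : ℕ) : ℤ) - a - 1 - 1 = b - a - 1 by omega, latticeWalk]

theorem latticeWalk_eq_pathSum (a b : ℕ) :
    latticeWalk a b = (1 / (√2 : ℂ) ^ (a + b + 1) * pathSumL a b,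
      1 / (√2 : ℂ) ^ (a + b + 1) * pathSumR a b) := by
  induction a generalizing b with
  | zero =>
    induction b with
    | zero => ext <;> simp [latticeWalk_zero_left_fst, latticeWalk_zero_right_snd]
    | succ b ih =>
      ext
      · simp [latticeWalk_zero_left_fst]
      · rw [latticeWalk_succ_right_snd, ih, pathSumR_succ_right]
        field_simp
        ring
  | succ a iha =>
    induction b with
    | zero =>
      ext
      · rw [latticeWalk_succ_left_fst, iha, pathSumL_succ_left]
        field_simp
        ring
      · simp [latticeWalk_zero_right_snd]
    | succ b ihb =>
      ext
      · rw [latticeWalk_succ_left_fst, iha, pathSumL_succ_left]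
        field_simp
        ring
      · rw [latticeWalk_succ_right_snd, ihb, pathSumR_succ_right]
        field_simp
        ring

lemma neg_one_zpow_natCast_sub {R : Type*} [DivisionRing R] (a j : ℕ) :
    (-1 : R) ^ ((a : ℤ) - j) = (-1) ^ (a + j) := by
  rw [zpow_sub₀ (neg_ne_zero.2 one_ne_zero), zpow_natCast, zpow_natCast, div_eq_mul_inv,
    ← inv_pow, inv_neg_one, pow_add]

lemma sum_Icc_zero_eq_sum_range {M : Type*} [AddCommMonoid M] (N : ℕ) (f : ℤ → M) :
    ∑ k ∈ Icc (0 : ℤ) N, f k = ∑ j ∈ range (N + 1), f j := by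
  rw [Int.Icc_eq_finset_map, sum_map]
  simp

lemma intChoose_natCast (m j : ℕ) : intChoose m j = m.choose j := by
  unfold intChoose
  split_ifs with h
  · simp
  · rw [Nat.choose_eq_zero_of_lt (by omega), Nat.cast_zero]

lemma intChoose_of_neg (m : ℤ) {j : ℤ} (h : j < 0) : intChoose m j = 0 :=
  if_neg fun hj => h.not_ge hj.1

lemma sum_Icc_eq_pathSumL {t : ℕ} {l : ℤ} {a b : ℕ} (ha : l = a + 1) (hb : (t : ℤ) - l = b) :
    ∑ k ∈ Icc (0 : ℤ) t, intChoose (l - 1) k * intChoose (t - l) k * (-1 : ℂ) ^ (l - k - 1) =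
      pathSumL a b := by
  rw [sum_Icc_zero_eq_sum_range, pathSumL,
    ← sum_range_mul_choose_mul_of_lt (N := t + 1) (by omega)]
  refine sum_congr rfl fun j _ => ?_
  rw [hb, show l - 1 = a by omega, show l - j - 1 = (a : ℤ) - j by omega, intChoose_natCast,
    intChoose_natCast, neg_one_zpow_natCast_sub]
  ring

lemma sum_Icc_eq_pathSumR {t : ℕ} {l : ℤ} {a b : ℕ} (ha : l = a + 1) (hb : (t : ℤ) - l = b) :
    ∑ k ∈ Icc (0 : ℤ) t, intChoose (l - 1) (k - 1) * intChoose (t - l) k * (-1 : ℂ) ^ (l - k) =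
      pathSumR a b := by
  rw [sum_Icc_zero_eq_sum_range, sum_range_succ', intChoose_of_neg _ (by omega), zero_mul,
    zero_mul, add_zero, pathSumR, ← sum_range_mul_choose_mul_of_lt (N := t) (by omega)]
  refine sum_congr rfl fun j _ => ?_
  rw [hb, show l - 1 = a by omega, show ((j + 1 : ℕ) : ℤ) - 1 = j by omega,
    show l - (j + 1 : ℕ) = (a : ℤ) - j by omega, intChoose_natCast, intChoose_natCast,
    neg_one_zpow_natCast_sub]
  ring

theorem hadamardWalk_path_counting_general
    (t : ℕ) (n : ℤ) (hn1 : -(t : ℤ) ≤ n) (hn2 : n < (t : ℤ))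
    (hpar : (2 : ℤ) ∣ ((t : ℤ) - n)) (l : ℤ) (hl : l = ((t : ℤ) - n) / 2) :
    (1 ≤ l ∧ l ≤ (t : ℤ)) ∧
    (hadamardWalk t n).1 =
      (1 / (Real.sqrt 2 : ℂ) ^ t) *
        ∑ k ∈ Finset.Icc (0 : ℤ) (t : ℤ),
          intChoose (l - 1) k * intChoose ((t : ℤ) - l) k * (-1 : ℂ) ^ (l - k - 1) ∧
    (hadamardWalk t n).2 =
      (1 / (Real.sqrt 2 : ℂ) ^ t) *
        ∑ k ∈ Finset.Icc (0 : ℤ) (t : ℤ),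
          intChoose (l - 1) (k - 1) * intChoose ((t : ℤ) - l) k * (-1 : ℂ) ^ (l - k) := by
  obtain ⟨a, ha⟩ : ∃ a : ℕ, l = a + 1 := ⟨(l - 1).toNat, by omega⟩
  obtain ⟨b, hb⟩ : ∃ b : ℕ, (t : ℤ) - l = b := ⟨((t : ℤ) - l).toNat, by omega⟩
  have ht : t = a + b + 1 := by omega
  have hn : n = (b : ℤ) - a - 1 := by omega
  refine ⟨⟨by omega, by omega⟩, ?_⟩
  rw [sum_Icc_eq_pathSumL ha hb, sum_Icc_eq_pathSumR ha hb, hn, ht]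
  exact Prod.ext_iff.1 (latticeWalk_eq_pathSum a b)

theorem hadamardWalk_path_counting
    (t : ℕ) (ht : 1 ≤ t) (n : ℤ) (hn1 : -(t : ℤ) ≤ n) (hn2 : n < (t : ℤ))
    (hpar : (2 : ℤ) ∣ ((t : ℤ) - n)) (l : ℤ) (hl : l = ((t : ℤ) - n) / 2) :
    (1 ≤ l ∧ l ≤ (t : ℤ)) ∧
    (hadamardWalk t n).1 =
      (1 / (Real.sqrt 2 : ℂ) ^ t) *
        ∑ k ∈ Finset.Icc (0 : ℤ) (t : ℤ),
          intChoose (l - 1) k * intChoose ((t : ℤ) - l) k * (-1 : ℂ) ^ (l - k - 1) ∧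
    (hadamardWalk t n).2 =
      (1 / (Real.sqrt 2 : ℂ) ^ t) *
        ∑ k ∈ Finset.Icc (0 : ℤ) (t : ℤ),
          intChoose (l - 1) (k - 1) * intChoose ((t : ℤ) - l) k * (-1 : ℂ) ^ (l - k) :=
  hadamardWalk_path_counting_general t n hn1 hn2 hpar l hl
end

section
/- Let U = [[a,b],[c,d]] be a 2×2 unitary complex matrix with abcd ≠ 0 and let φ = (α,β) ∈ ℂ² with |α|² + |β|² = 1. Then the first and second moments of Konno's density satisfy ∫_{−|a|}^{|a|} x·f(x;φ) dx = −μ_φ·(1 − √(1−|a|²)) and ∫_{−|a|}^{|a|} x²·f(x;φ) dx = 1 − √(1−|a|²). -/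
/-!
With `r = ‖a‖`, the density is `w(x) (1 - μ x)` for the even weight
`w(x) = √(1 - r²) / (π (1 - x²) √(r² - x²))`, so both moments are combinations of moments of `w`,
whose odd moments vanish by symmetry. Writing `x² / (1 - x²) = 1 / (1 - x²) - 1`, the second
moment of `w` comes from the elementary integrals `∫ 1 / √(r² - x²) = π` (antiderivative
`arcsin (x / r)`) and `∫ 1 / ((1 - x²) √(r² - x²)) = π / √(1 - r²)` (antiderivative
`arcsin (κ x / √(1 - x²)) / √(1 - r²)` with `κ = √(1 - r²) / r`). Unitarity gives
`‖a‖² + ‖c‖² = 1`, hence `0 < ‖a‖ < 1` when `a c ≠ 0`.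
-/

/-- Konno's density function `f(x; (α,β))` for the one-dimensional quantum walk with coin
`U = [[a,b],[c,d]]` and initial qubit `(α,β)`. -/
noncomputable def konnoDensity (a b α β : ℂ) (x : ℝ) : ℝ :=
  if -‖a‖ < x ∧ x < ‖a‖ then
    (Real.sqrt (1 - ‖a‖ ^ 2) / (Real.pi * (1 - x ^ 2) * Real.sqrt (‖a‖ ^ 2 - x ^ 2))) *
      (1 - (‖α‖ ^ 2 - ‖β‖ ^ 2 +
        (a * α * (starRingEnd ℂ) (b * β) + (starRingEnd ℂ) (a * α) * (b * β)).re / ‖a‖ ^ 2) * x)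
  else 0

open Real MeasureTheory intervalIntegral Set
open scoped Interval

theorem Function.Odd.intervalIntegral_eq_zero {E : Type*} [NormedAddCommGroup E]
    [NormedSpace ℝ E] {f : ℝ → E} (hf : f.Odd) (r : ℝ) : ∫ x in -r..r, f x = 0 := by
  have h := integral_comp_neg (a := -r) (b := r) f
  simp only [hf _, intervalIntegral.integral_neg, neg_neg] at h
  linear_combination (norm := module) (-(1 / 2 : ℝ)) • h

theorem intervalIntegrable_and_integral_eq_sub_of_hasDerivAt_of_nonneg {f g : ℝ → ℝ} {a b : ℝ}
    (hab : a ≤ b) (hcont : ContinuousOn g (Icc a b))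
    (hderiv : ∀ x ∈ Ioo a b, HasDerivAt g (f x) x) (hf : ∀ x ∈ Ioo a b, 0 ≤ f x) :
    IntervalIntegrable f volume a b ∧ ∫ x in a..b, f x = g b - g a := by
  have hint : IntervalIntegrable f volume a b := by
    rw [intervalIntegrable_iff_integrableOn_Ioc_of_le hab]
    exact integrableOn_deriv_of_nonneg hcont hderiv hf
  exact ⟨hint, integral_eq_sub_of_hasDerivAt_of_le hab hcont hderiv hint⟩

theorem sqrt_one_sub_div_sq {r : ℝ} (hr : 0 < r) (x : ℝ) :
    √(1 - (x / r) ^ 2) = √(r ^ 2 - x ^ 2) / r := by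
  rw [show 1 - (x / r) ^ 2 = (r ^ 2 - x ^ 2) / r ^ 2 by field_simp, sqrt_div' _ (sq_nonneg r),
    sqrt_sq hr.le]

theorem hasDerivAt_arcsin_mul_div_sqrt_one_sub_sq (c : ℝ) {x : ℝ} (hx : (1 + c ^ 2) * x ^ 2 < 1) :
    HasDerivAt (fun y => arcsin (c * y / √(1 - y ^ 2)))
      (c / ((1 - x ^ 2) * √(1 - (1 + c ^ 2) * x ^ 2))) x := by
  have hx1 : 0 < 1 - x ^ 2 := by nlinarith [sq_nonneg c, sq_nonneg x]
  set t := √(1 - x ^ 2) with ht_def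
  have ht : 0 < t := sqrt_pos.2 hx1
  have ht2 : t ^ 2 = 1 - x ^ 2 := sq_sqrt hx1.le
  have hu : HasDerivAt (fun y => c * y / √(1 - y ^ 2)) (c / ((1 - x ^ 2) * t)) x := by
    have hsqrt : HasDerivAt (fun y => √(1 - y ^ 2)) (-x / t) x := by
      refine (((hasDerivAt_pow 2 x).const_sub 1).sqrt hx1.ne').congr_deriv ?_
      rw [← ht_def]
      field_simp
      ring
    refine (((hasDerivAt_id x).const_mul c).div hsqrt ht.ne').congr_deriv ?_
    rw [id, ← ht_def]
    field_simp
    rw [ht2]; ring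
  have hsq : 1 - (c * x / t) ^ 2 = (1 - (1 + c ^ 2) * x ^ 2) / t ^ 2 := by
    field_simp; rw [ht2]; ring
  have hlt : (c * x / t) ^ 2 < 1 := by
    have : 0 < (1 - (1 + c ^ 2) * x ^ 2) / t ^ 2 := by apply div_pos <;> nlinarith
    linarith
  have hne : c * x / t ≠ -1 ∧ c * x / t ≠ 1 := by
    constructor <;> intro h <;> rw [h] at hlt <;> norm_num at hlt
  refine ((hasDerivAt_arcsin hne.1 hne.2).comp x hu).congr_deriv ?_
  rw [hsq, sqrt_div' _ (sq_nonneg t), sqrt_sq ht.le]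
  field_simp

section Kernels

variable {r : ℝ}

theorem hasDerivAt_arcsin_div (hr : 0 < r) {x : ℝ} (hx : x ∈ Ioo (-r) r) :
    HasDerivAt (fun y => arcsin (y / r)) (1 / √(r ^ 2 - x ^ 2)) x := by
  have hlt : (x / r) ^ 2 < 1 := by
    rw [div_pow, div_lt_one (by positivity)]; exact sq_lt_sq' hx.1 hx.2
  have hne : x / r ≠ -1 ∧ x / r ≠ 1 := by
    constructor <;> intro h <;> rw [h] at hlt <;> norm_num at hlt
  refine ((hasDerivAt_arcsin hne.1 hne.2).comp x ((hasDerivAt_id x).div_const r)).congr_deriv ?_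
  rw [sqrt_one_sub_div_sq hr]
  field_simp

theorem intervalIntegrable_and_integral_one_div_sqrt_sq_sub_sq (hr : 0 < r) :
    IntervalIntegrable (fun x => 1 / √(r ^ 2 - x ^ 2)) volume (-r) r ∧
      ∫ x in -r..r, 1 / √(r ^ 2 - x ^ 2) = π := by
  have hcont : ContinuousOn (fun y => arcsin (y / r)) (Icc (-r) r) := by fun_prop
  obtain ⟨hint, hval⟩ := intervalIntegrable_and_integral_eq_sub_of_hasDerivAt_of_nonneg
    (by linarith) hcont (fun x hx => hasDerivAt_arcsin_div hr hx) (fun x _ => by positivity)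
  refine ⟨hint, ?_⟩
  rw [hval, div_self hr.ne', neg_div, div_self hr.ne', arcsin_neg, arcsin_one]
  ring

theorem intervalIntegrable_and_integral_one_div_one_sub_sq_mul_sqrt_sq_sub_sq
    (hr : 0 < r) (hr1 : r < 1) :
    IntervalIntegrable (fun x => 1 / ((1 - x ^ 2) * √(r ^ 2 - x ^ 2))) volume (-r) r ∧
      ∫ x in -r..r, 1 / ((1 - x ^ 2) * √(r ^ 2 - x ^ 2)) = π / √(1 - r ^ 2) := by
  set s := √(1 - r ^ 2) with hs_def
  have hs : 0 < s := sqrt_pos.2 (by nlinarith)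
  have hs2 : s ^ 2 = 1 - r ^ 2 := sq_sqrt (by nlinarith)
  have hc : ∀ x : ℝ, (1 + (s / r) ^ 2) * x ^ 2 = (x / r) ^ 2 := fun x => by
    field_simp; rw [hs2]; ring
  have hderiv : ∀ x ∈ Ioo (-r) r, HasDerivAt (fun y => arcsin (s / r * y / √(1 - y ^ 2)) / s)
      (1 / ((1 - x ^ 2) * √(r ^ 2 - x ^ 2))) x := by
    intro x hx
    have hlt : (1 + (s / r) ^ 2) * x ^ 2 < 1 := by
      rw [hc, div_pow, div_lt_one (by positivity)]; exact sq_lt_sq' hx.1 hx.2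
    refine ((hasDerivAt_arcsin_mul_div_sqrt_one_sub_sq (s / r) hlt).div_const s).congr_deriv ?_
    rw [hc, sqrt_one_sub_div_sq hr]
    have : 0 < 1 - x ^ 2 := by nlinarith [sq_lt_sq' hx.1 hx.2]
    field_simp
  have hcont : ContinuousOn (fun y => arcsin (s / r * y / √(1 - y ^ 2)) / s) (Icc (-r) r) := by
    refine (continuous_arcsin.comp_continuousOn (ContinuousOn.div (by fun_prop) (by fun_prop)
      fun x hx => ?_)).div_const s
    have : 0 < 1 - x ^ 2 := by nlinarith [sq_le_sq' hx.1 hx.2]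
    positivity
  obtain ⟨hint, hval⟩ := intervalIntegrable_and_integral_eq_sub_of_hasDerivAt_of_nonneg
    (by linarith) hcont hderiv fun x hx => by
      have : 0 < 1 - x ^ 2 := by nlinarith [sq_lt_sq' hx.1 hx.2]
      positivity
  refine ⟨hint, ?_⟩
  have hend : s / r * r / √(1 - r ^ 2) = 1 := by
    rw [← hs_def]; field_simp
  rw [hval, neg_sq, mul_neg, neg_div, hend, arcsin_neg, arcsin_one]
  ring

end Kernels

noncomputable def konnoWeight (r x : ℝ) : ℝ :=
  √(1 - r ^ 2) / (π * (1 - x ^ 2) * √(r ^ 2 - x ^ 2))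

theorem konnoWeight_neg (r x : ℝ) : konnoWeight r (-x) = konnoWeight r x := by
  simp only [konnoWeight, neg_sq]

theorem integral_pow_mul_konnoWeight_of_odd {k : ℕ} (hk : Odd k) (r : ℝ) :
    ∫ x in -r..r, x ^ k * konnoWeight r x = 0 :=
  Function.Odd.intervalIntegral_eq_zero (fun x => by rw [konnoWeight_neg, hk.neg_pow, neg_mul]) r

theorem konnoWeight_eq_mul (r x : ℝ) :
    konnoWeight r x = √(1 - r ^ 2) / π * (1 / ((1 - x ^ 2) * √(r ^ 2 - x ^ 2))) := by
  rw [konnoWeight, div_mul_div_comm, mul_one, mul_assoc]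

section KonnoWeight

variable {r : ℝ}

theorem intervalIntegrable_konnoWeight (hr : 0 < r) (hr1 : r < 1) :
    IntervalIntegrable (konnoWeight r) volume (-r) r := by
  rw [funext (konnoWeight_eq_mul r)]
  exact (intervalIntegrable_and_integral_one_div_one_sub_sq_mul_sqrt_sq_sub_sq hr hr1).1.const_mul
    (√(1 - r ^ 2) / π)

theorem integral_sq_mul_konnoWeight (hr : 0 < r) (hr1 : r < 1) :
    ∫ x in -r..r, x ^ 2 * konnoWeight r x = 1 - √(1 - r ^ 2) := by
  obtain ⟨hint₁, hval₁⟩ := intervalIntegrable_and_integral_one_div_sqrt_sq_sub_sq hr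
  obtain ⟨hint₂, hval₂⟩ :=
    intervalIntegrable_and_integral_one_div_one_sub_sq_mul_sqrt_sq_sub_sq hr hr1
  have hs : 0 < √(1 - r ^ 2) := sqrt_pos.2 (by nlinarith)
  have hsplit : EqOn (fun x => x ^ 2 * konnoWeight r x)
      (fun x => √(1 - r ^ 2) / π * (1 / ((1 - x ^ 2) * √(r ^ 2 - x ^ 2)) -
        1 / √(r ^ 2 - x ^ 2))) [[-r, r]] := by
    intro x hx
    rw [uIcc_of_le (by linarith)] at hx
    have : 0 < 1 - x ^ 2 := by nlinarith [sq_le_sq' hx.1 hx.2]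
    simp only [konnoWeight]
    field_simp
    ring
  rw [integral_congr hsplit, intervalIntegral.integral_const_mul, integral_sub hint₂ hint₁,
    hval₁, hval₂]
  field_simp

theorem integral_pow_mul_konnoWeight_mul_one_sub (hr : 0 < r) (hr1 : r < 1) (k : ℕ) (μ : ℝ) :
    ∫ x in -r..r, x ^ k * (konnoWeight r x * (1 - μ * x)) =
      (∫ x in -r..r, x ^ k * konnoWeight r x) -
        μ * ∫ x in -r..r, x ^ (k + 1) * konnoWeight r x := by
  have hint (n : ℕ) : IntervalIntegrable (fun x => x ^ n * konnoWeight r x) volume (-r) r :=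
    (intervalIntegrable_konnoWeight hr hr1).continuousOn_mul (continuous_pow n).continuousOn
  rw [← intervalIntegral.integral_const_mul, ← integral_sub (hint k) ((hint (k + 1)).const_mul μ)]
  congr 1 with x
  ring

theorem konnoWeight_moments (hr : 0 < r) (hr1 : r < 1) (μ : ℝ) :
    (∫ x in -r..r, x * (konnoWeight r x * (1 - μ * x))) = -μ * (1 - √(1 - r ^ 2)) ∧
      ∫ x in -r..r, x ^ 2 * (konnoWeight r x * (1 - μ * x)) = 1 - √(1 - r ^ 2) := by
  have h₁ := integral_pow_mul_konnoWeight_mul_one_sub hr hr1 1 μ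
  have h₂ := integral_pow_mul_konnoWeight_mul_one_sub hr hr1 2 μ
  rw [integral_pow_mul_konnoWeight_of_odd odd_one, integral_sq_mul_konnoWeight hr hr1] at h₁
  simp only [pow_one] at h₁
  rw [integral_sq_mul_konnoWeight hr hr1,
    integral_pow_mul_konnoWeight_of_odd (by decide : Odd (2 + 1))] at h₂
  exact ⟨by rw [h₁]; ring, by rw [h₂]; ring⟩

end KonnoWeight

noncomputable def konnoMu (a b α β : ℂ) : ℝ :=
  ‖α‖ ^ 2 - ‖β‖ ^ 2 +
    (a * α * (starRingEnd ℂ) (b * β) + (starRingEnd ℂ) (a * α) * (b * β)).re / ‖a‖ ^ 2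

-- At `x = ±‖a‖` the `else` branch is `0`, and so is `konnoWeight`, as `√0 = 0` and `y / 0 = 0`.
theorem konnoDensity_eqOn (a b α β : ℂ) :
    EqOn (konnoDensity a b α β) (fun x => konnoWeight ‖a‖ x * (1 - konnoMu a b α β * x))
      [[-‖a‖, ‖a‖]] := by
  intro x hx
  rw [uIcc_of_le (by simp)] at hx
  rw [konnoDensity]
  split_ifs with h
  · rfl
  · have hx2 : x ^ 2 = ‖a‖ ^ 2 := by
      rcases not_and_or.1 h with h | h
      · rw [le_antisymm (not_lt.1 h) hx.1, neg_sq]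
      · rw [le_antisymm hx.2 (not_lt.1 h)]
    simp [konnoWeight, hx2]

theorem norm_sq_add_norm_sq_of_mem_unitaryGroup {a b c d : ℂ}
    (hU : !![a, b; c, d] ∈ Matrix.unitaryGroup (Fin 2) ℂ) : ‖a‖ ^ 2 + ‖c‖ ^ 2 = 1 := by
  have h := congrArg Complex.re (congrFun (congrFun (Matrix.mem_unitaryGroup_iff'.1 hU) 0) 0)
  simpa [Matrix.mul_apply, Fin.sum_univ_two, Complex.conj_mul', ← Complex.ofReal_pow] using h

theorem konnoDensity_moments_general
    (a b c d α β : ℂ)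
    (hU : !![a, b; c, d] ∈ Matrix.unitaryGroup (Fin 2) ℂ)
    (habcd : a * b * c * d ≠ 0) :
    (∫ x in (-‖a‖)..‖a‖, x * konnoDensity a b α β x) =
      -(‖α‖ ^ 2 - ‖β‖ ^ 2 +
          (a * α * (starRingEnd ℂ) (b * β) + (starRingEnd ℂ) (a * α) * (b * β)).re / ‖a‖ ^ 2) *
        (1 - Real.sqrt (1 - ‖a‖ ^ 2)) ∧
    (∫ x in (-‖a‖)..‖a‖, x ^ 2 * konnoDensity a b α β x) = 1 - Real.sqrt (1 - ‖a‖ ^ 2) := by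
  have ha : 0 < ‖a‖ := norm_pos_iff.2 (left_ne_zero_of_mul (left_ne_zero_of_mul
    (left_ne_zero_of_mul habcd)))
  have hc : 0 < ‖c‖ := norm_pos_iff.2 (right_ne_zero_of_mul (left_ne_zero_of_mul habcd))
  have ha1 : ‖a‖ < 1 := by nlinarith [norm_sq_add_norm_sq_of_mem_unitaryGroup hU]
  have hf := konnoDensity_eqOn a b α β
  rw [integral_congr fun x hx => congrArg (x * ·) (hf hx),
    integral_congr fun x hx => congrArg (x ^ 2 * ·) (hf hx)]
  exact konnoWeight_moments ha ha1 (konnoMu a b α β)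

theorem konnoDensity_moments
    (a b c d α β : ℂ)
    (hU : !![a, b; c, d] ∈ Matrix.unitaryGroup (Fin 2) ℂ)
    (habcd : a * b * c * d ≠ 0)
    (hφ : ‖α‖ ^ 2 + ‖β‖ ^ 2 = 1) :
    (∫ x in (-‖a‖)..‖a‖, x * konnoDensity a b α β x) =
      -(‖α‖ ^ 2 - ‖β‖ ^ 2 +
          (a * α * (starRingEnd ℂ) (b * β) + (starRingEnd ℂ) (a * α) * (b * β)).re / ‖a‖ ^ 2) *
        (1 - Real.sqrt (1 - ‖a‖ ^ 2)) ∧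
    (∫ x in (-‖a‖)..‖a‖, x ^ 2 * konnoDensity a b α β x) = 1 - Real.sqrt (1 - ‖a‖ ^ 2) :=
  konnoDensity_moments_general a b c d α β hU habcd
end

section
/- Let V be a finite-dimensional complex inner product space, U : V → V a unitary operator, (v_k)_{k∈K} an orthonormal basis of V with U·v_k = λ_k·v_k for each k, ψ₀ = Σ_k a_k·v_k a unit vector, and e ∈ V. Then the time-averaged transition probabilities converge: lim_{T→∞} (1/T) · Σ_{t=0}^{T−1} |⟨e, U^t ψ₀⟩|² = Σ_{(i,j)∈K×K, λ_i = λ_j} a_i·conj(a_j)·⟨e, v_i⟩·conj(⟨e, v_j⟩). -/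
/-!
Expanding `ψ₀` in the eigenbasis gives `|⟨e, U^t ψ₀⟩|² = ∑_{i,j} c_{ij} (λ_i conj λ_j)^t`.
The eigenvalues of a unitary lie on the unit circle, and so does each `μ = λ_i conj λ_j`;
the Cesàro mean of `μ^t` is `1` if `μ = 1` and `O(1/T)` otherwise (geometric sum), while
`μ = 1` exactly when `λ_i = λ_j`.
-/

open Filter Topology ComplexConjugate

section Cesaro

variable {𝕜 : Type*} [RCLike 𝕜]

theorem tendsto_cesaro_pow {μ : 𝕜} (hμ : ‖μ‖ ≤ 1) :
    Tendsto (fun T : ℕ => (T : 𝕜)⁻¹ * ∑ t ∈ Finset.range T, μ ^ t) atTop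
      (𝓝 (if μ = 1 then 1 else 0)) := by
  split_ifs with h
  · subst h
    refine tendsto_const_nhds.congr' ?_
    filter_upwards [eventually_ne_atTop 0] with T hT
    simp [hT]
  · have hbound : ∀ T : ℕ,
        ‖(T : 𝕜)⁻¹ * ∑ t ∈ Finset.range T, μ ^ t‖ ≤ (T : ℝ)⁻¹ * (2 / ‖μ - 1‖) := by
      intro T
      rw [norm_mul, norm_inv, RCLike.norm_natCast, geom_sum_eq h, norm_div]
      gcongr
      calc ‖μ ^ T - 1‖ ≤ ‖μ‖ ^ T + 1 := by simpa using norm_sub_le (μ ^ T) 1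
        _ ≤ 2 := by nlinarith [pow_le_one₀ (norm_nonneg μ) hμ (n := T)]
    refine squeeze_zero_norm hbound ?_
    simpa using tendsto_inv_atTop_nhds_zero_nat.mul_const (2 / ‖μ - 1‖)

theorem tendsto_cesaro_sum_mul_pow {ι : Type*} [Fintype ι] (c μ : ι → 𝕜) (hμ : ∀ i, ‖μ i‖ ≤ 1) :
    Tendsto (fun T : ℕ => (T : 𝕜)⁻¹ * ∑ t ∈ Finset.range T, ∑ i, c i * μ i ^ t) atTop
      (𝓝 (∑ i with μ i = 1, c i)) := by
  classical
  have hmean : ∀ T : ℕ, (T : 𝕜)⁻¹ * ∑ t ∈ Finset.range T, ∑ i, c i * μ i ^ t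
      = ∑ i, c i * ((T : 𝕜)⁻¹ * ∑ t ∈ Finset.range T, μ i ^ t) := by
    intro T
    simp only [Finset.sum_comm (s := Finset.range T), Finset.mul_sum]
    exact Finset.sum_congr rfl fun _ _ => Finset.sum_congr rfl fun _ _ => by ring
  simp only [hmean, Finset.sum_filter]
  refine tendsto_finsetSum _ fun i _ => ?_
  simpa using (tendsto_cesaro_pow (hμ i)).const_mul (c i)

end Cesaro

section InnerProductSpace

variable {𝕜 E : Type*} [RCLike 𝕜] [NormedAddCommGroup E] [InnerProductSpace 𝕜 E]

theorem mul_conj_eq_one_iff {a b : 𝕜} (hb : ‖b‖ = 1) :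
    a * conj b = 1 ↔ a = b := by
  have hbb : b * conj b = 1 := by rw [RCLike.mul_conj, hb]; norm_num
  have hconj : conj b ≠ 0 := (map_ne_zero _).mpr (norm_ne_zero_iff.mp (hb ▸ one_ne_zero))
  rw [← hbb, mul_left_inj' hconj]

theorem LinearIsometry.norm_eq_one_of_hasEigenvector (f : E →ₗᵢ[𝕜] E) {μ : 𝕜} {x : E}
    (hx : Module.End.HasEigenvector f.toLinearMap μ x) : ‖μ‖ = 1 := by
  have hnorm : ‖μ‖ * ‖x‖ = 1 * ‖x‖ := by
    rw [← norm_smul, ← hx.apply_eq_smul, one_mul]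
    exact f.norm_map x
  exact mul_right_cancel₀ (norm_ne_zero_iff.mpr hx.2) hnorm

theorem ofReal_sq_norm_sum {ι : Type*} [Fintype ι] (z : ι → 𝕜) :
    ((‖∑ i, z i‖ ^ 2 : ℝ) : 𝕜) = ∑ p : ι × ι, z p.1 * conj (z p.2) := by
  rw [RCLike.ofReal_pow, ← RCLike.mul_conj, map_sum, Finset.sum_mul_sum]
  exact (Fintype.sum_prod_type' fun i j => z i * conj (z j)).symm

theorem inner_pow_apply_sum_smul {ι : Type*} [Fintype ι] {f : Module.End 𝕜 E} {v : ι → E}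
    {lam : ι → 𝕜} (hv : ∀ i, f.HasEigenvector (lam i) (v i)) (a : ι → 𝕜) (e : E) (t : ℕ) :
    inner 𝕜 e ((f ^ t) (∑ i, a i • v i)) = ∑ i, a i * lam i ^ t * inner 𝕜 e (v i) := by
  simp only [map_sum, map_smul, (hv _).pow_apply, inner_sum, smul_smul, inner_smul_right]

end InnerProductSpace

theorem time_averaged_transition_probability_general
    {V : Type*} [NormedAddCommGroup V] [InnerProductSpace ℂ V]
    {K : Type*} [Fintype K]
    (U : V →ₗ[ℂ] V)
    (hU : ∀ x y : V, (inner ℂ (U x) (U y) : ℂ) = inner ℂ x y)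
    (v : OrthonormalBasis K ℂ V)
    (lam : K → ℂ) (hEig : ∀ k : K, U (v k) = lam k • v k)
    (a : K → ℂ) (ψ₀ : V) (hψ₀ : ψ₀ = ∑ k : K, a k • v k)
    (e : V) :
    Tendsto (fun T : ℕ =>
        (((T : ℂ))⁻¹ * ∑ t ∈ Finset.range T, ((‖(inner ℂ e ((U ^ t) ψ₀) : ℂ)‖ ^ 2 : ℝ) : ℂ)))
      atTop
      (𝓝 (∑ p ∈ Finset.univ.filter (fun p : K × K => lam p.1 = lam p.2),
            a p.1 * (starRingEnd ℂ) (a p.2) * (inner ℂ e (v p.1) : ℂ) *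
              (starRingEnd ℂ) ((inner ℂ e (v p.2) : ℂ)))) := by
  have hv : ∀ k, Module.End.HasEigenvector U (lam k) (v k) := fun k =>
    ⟨Module.End.mem_eigenspace_iff.mpr (hEig k), v.orthonormal.ne_zero k⟩
  have hlam : ∀ k, ‖lam k‖ = 1 := fun k =>
    (U.isometryOfInner hU).norm_eq_one_of_hasEigenvector (hv k)
  set c : K × K → ℂ := fun p =>
    a p.1 * conj (a p.2) * inner ℂ e (v p.1) * conj (inner ℂ e (v p.2))
  set μ : K × K → ℂ := fun p => lam p.1 * conj (lam p.2)
  have hprob : ∀ t : ℕ, ((‖(inner ℂ e ((U ^ t) ψ₀) : ℂ)‖ ^ 2 : ℝ) : ℂ) = ∑ p, c p * μ p ^ t := by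
    intro t
    rw [hψ₀, inner_pow_apply_sum_smul hv]
    refine (ofReal_sq_norm_sum _).trans (Finset.sum_congr rfl fun p _ => ?_)
    simp only [c, μ, map_mul, map_pow]
    ring
  have hμ : ∀ p, ‖μ p‖ ≤ 1 := fun p => by simp [μ, hlam]
  simp only [hprob]
  convert tendsto_cesaro_sum_mul_pow c μ hμ using 3
  exact Finset.filter_congr fun p _ => (mul_conj_eq_one_iff (hlam p.2)).symm

theorem time_averaged_transition_probability
    {V : Type*} [NormedAddCommGroup V] [InnerProductSpace ℂ V] [FiniteDimensional ℂ V]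
    {K : Type*} [Fintype K] [DecidableEq K]
    (U : V →ₗ[ℂ] V)
    (hU : ∀ x y : V, (inner ℂ (U x) (U y) : ℂ) = inner ℂ x y)
    (v : OrthonormalBasis K ℂ V)
    (lam : K → ℂ) (hEig : ∀ k : K, U (v k) = lam k • v k)
    (a : K → ℂ) (ψ₀ : V) (hψ₀ : ψ₀ = ∑ k : K, a k • v k) (hunit : ‖ψ₀‖ = 1)
    (e : V) :
    Tendsto (fun T : ℕ =>
        (((T : ℂ))⁻¹ * ∑ t ∈ Finset.range T, ((‖(inner ℂ e ((U ^ t) ψ₀) : ℂ)‖ ^ 2 : ℝ) : ℂ)))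
      atTop
      (𝓝 (∑ p ∈ Finset.univ.filter (fun p : K × K => lam p.1 = lam p.2),
            a p.1 * (starRingEnd ℂ) (a p.2) * (inner ℂ e (v p.1) : ℂ) *
              (starRingEnd ℂ) ((inner ℂ e (v p.2) : ℂ)))) :=
  time_averaged_transition_probability_general U hU v lam hEig a ψ₀ hψ₀ e
end

section
/- Let Γ be a finite Abelian group with N = |Γ| elements, let d ≥ 1, let s : {1,…,d} → Γ, and let C be a d×d unitary complex matrix. Let U = S·(C ⊗ I) be the coined quantum walk operator on ℂ^{ {1,…,d} × Γ }. If U has d·N pairwise distinct eigenvalues, then for every unit vector ψ₀ and every v ∈ Γ, the time-averaged node distribution converges to the uniform distribution: lim_{T→∞} (1/T)·Σ_{t=0}^{T−1} P_t(v | ψ₀) = 1/N, independently of ψ₀. -/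
/-!
For the ℓ² inner product the walk operator `U` is unitary, so its `d·N` distinct eigenvalues `λₖ`
lie on the unit circle and its normalised eigenvectors `φₖ` form an orthonormal basis. Translations
of `Γ` commute with `U` and every eigenspace is a line, so a translation multiplies each `φₖ` by a
phase: the coin mass `Σᵢ |φₖ(i,v)|²` of an eigenvector is the same at every node, hence `1/N`.
Expanding `ψ₀ = Σ cₖ φₖ`, the node distribution `P_t(v)` is a combination of the phases
`(conj λₖ · λₗ)^t`, whose Cesàro means tend to `δₖₗ` because the eigenvalues are distinct; what
survives is `Σₖ |cₖ|² / N = 1/N`.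
-/

open Filter Topology Finset ComplexConjugate Matrix

theorem tendsto_cesaro_pow_of_norm_le_one {μ : ℂ} (hμ : ‖μ‖ ≤ 1) :
    Tendsto (fun T : ℕ => (T : ℂ)⁻¹ * ∑ t ∈ range T, μ ^ t) atTop
      (𝓝 (if μ = 1 then 1 else 0)) := by
  split_ifs with h
  · subst h
    simp only [one_pow, sum_const, card_range, nsmul_eq_mul, mul_one]
    refine tendsto_const_nhds.congr' ?_
    filter_upwards [eventually_ne_atTop 0] with T hT
    exact (inv_mul_cancel₀ (Nat.cast_ne_zero.mpr hT)).symm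
  · have hbound : ∀ T : ℕ, ‖(T : ℂ)⁻¹ * ∑ t ∈ range T, μ ^ t‖ ≤ (T : ℝ)⁻¹ * (2 / ‖μ - 1‖) := by
      intro T
      rw [norm_mul, geom_sum_eq h, norm_div, norm_inv, Complex.norm_natCast]
      gcongr
      calc ‖μ ^ T - 1‖ ≤ ‖μ ^ T‖ + ‖(1 : ℂ)‖ := norm_sub_le _ _
        _ ≤ 2 := by rw [norm_pow, norm_one]; linarith [pow_le_one₀ (norm_nonneg μ) hμ (n := T)]
    refine squeeze_zero_norm hbound ?_
    simpa using tendsto_inv_atTop_nhds_zero_nat.mul_const (2 / ‖μ - 1‖)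

theorem conj_mul_eq_one_iff_of_norm_eq_one {μ ν : ℂ} (hμ : ‖μ‖ = 1) : conj μ * ν = 1 ↔ μ = ν := by
  have hμμ : conj μ * μ = 1 := by rw [RCLike.conj_mul, hμ]; norm_num
  constructor
  · intro h
    exact (mul_left_cancel₀ (left_ne_zero_of_mul_eq_one hμμ) (hμμ.trans h.symm))
  · rintro rfl; exact hμμ

theorem tendsto_cesaro_norm_sq_sum_pow_smul {F : Type*} [NormedAddCommGroup F]
    [InnerProductSpace ℂ F] {ι : Type*} [Fintype ι] {lam : ι → ℂ} (hlam : Function.Injective lam)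
    (hnorm : ∀ k, ‖lam k‖ = 1) (w : ι → F) :
    Tendsto (fun T : ℕ => (T : ℝ)⁻¹ * ∑ t ∈ range T, ‖∑ k, lam k ^ t • w k‖ ^ 2) atTop
      (𝓝 (∑ k, ‖w k‖ ^ 2)) := by
  classical
  have hexpand : ∀ t : ℕ, ‖∑ k, lam k ^ t • w k‖ ^ 2
      = (∑ k, ∑ l, (conj (lam k) * lam l) ^ t * inner ℂ (w k) (w l)).re := by
    intro t
    rw [← inner_self_eq_norm_sq (𝕜 := ℂ), sum_inner]
    simp_rw [inner_sum, inner_smul_left, inner_smul_right, mul_pow, map_pow, mul_assoc]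
    rfl
  have hpair : ∀ k l, Tendsto (fun T : ℕ => (T : ℂ)⁻¹ * ∑ t ∈ range T, (conj (lam k) * lam l) ^ t)
      atTop (𝓝 (if k = l then 1 else 0)) := by
    intro k l
    simpa only [conj_mul_eq_one_iff_of_norm_eq_one (hnorm k), hlam.eq_iff] using
      tendsto_cesaro_pow_of_norm_le_one (μ := conj (lam k) * lam l) (by simp [hnorm])
  have hlim := (Complex.continuous_re.tendsto _).comp <| tendsto_finsetSum univ fun k _ =>
    tendsto_finsetSum univ fun l _ => (hpair k l).mul_const (inner ℂ (w k) (w l))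
  simp only [ite_mul, one_mul, zero_mul, sum_ite_eq, mem_univ, if_true, Complex.re_sum,
    inner_self_eq_norm_sq_to_K, Complex.coe_algebraMap, ← Complex.ofReal_pow,
    Complex.ofReal_re] at hlim
  refine hlim.congr fun T => ?_
  have hre : ((T : ℂ)⁻¹ *
      ∑ t ∈ range T, ∑ k, ∑ l, (conj (lam k) * lam l) ^ t * inner ℂ (w k) (w l)).re
      = (T : ℝ)⁻¹ * ∑ t ∈ range T, ‖∑ k, lam k ^ t • w k‖ ^ 2 := by
    rw [← Complex.ofReal_natCast, ← Complex.ofReal_inv, Complex.re_ofReal_mul, Complex.re_sum]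
    simp only [hexpand]
  rw [Function.comp_apply, ← hre, mul_sum]
  congr 1
  simp only [sum_mul, mul_sum, mul_assoc]
  exact (sum_comm.trans (sum_congr rfl fun _ _ => sum_comm)).symm

section InnerPreserving

variable {E : Type*} [NormedAddCommGroup E] [InnerProductSpace ℂ E] {W : Module.End ℂ E}

theorem norm_eq_one_of_apply_eq_smul (hW : ∀ x y, inner ℂ (W x) (W y) = inner ℂ x y)
    {μ : ℂ} {x : E} (hx : W x = μ • x) (hx0 : x ≠ 0) : ‖μ‖ = 1 := by
  have h := hW x x
  rw [hx, inner_smul_left, inner_smul_right, ← mul_assoc, RCLike.conj_mul,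
    mul_eq_right₀ (inner_self_ne_zero.mpr hx0), ← RCLike.ofReal_pow, ← RCLike.ofReal_one,
    RCLike.ofReal_inj] at h
  exact (pow_eq_one_iff_of_nonneg (norm_nonneg μ) two_ne_zero).mp h

theorem inner_eq_zero_of_apply_eq_smul (hW : ∀ x y, inner ℂ (W x) (W y) = inner ℂ x y)
    {μ ν : ℂ} {x y : E} (hμ : ‖μ‖ = 1) (hx : W x = μ • x) (hy : W y = ν • y) (hμν : μ ≠ ν) :
    inner ℂ x y = 0 := by
  have h := hW x y
  rw [hx, hy, inner_smul_left, inner_smul_right, ← mul_assoc] at h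
  by_contra hxy
  exact hμν ((conj_mul_eq_one_iff_of_norm_eq_one hμ).mp ((mul_eq_right₀ hxy).mp h))

theorem exists_orthonormalBasis_apply_eq_smul [FiniteDimensional ℂ E]
    (hW : ∀ x y, inner ℂ (W x) (W y) = inner ℂ x y) {ι : Type*} [Fintype ι] {lam : ι → ℂ}
    (hlam : Function.Injective lam) (heig : ∀ k, W.HasEigenvalue (lam k))
    (hcard : Fintype.card ι = Module.finrank ℂ E) :
    ∃ b : OrthonormalBasis ι ℂ E, ∀ k, W (b k) = lam k • b k := by
  choose φ hφ using fun k => (heig k).exists_hasEigenvector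
  set u : ι → E := fun k => (‖φ k‖⁻¹ : ℂ) • φ k
  have hu : ∀ k, W (u k) = lam k • u k := fun k => by
    rw [map_smul, (hφ k).apply_eq_smul, smul_comm]
  have hunorm : ∀ k, ‖u k‖ = 1 := fun k => norm_smul_inv_norm (hφ k).2
  have hon : Orthonormal ℂ u := ⟨hunorm, fun k l hkl =>
    inner_eq_zero_of_apply_eq_smul hW
      (norm_eq_one_of_apply_eq_smul hW (hφ k).apply_eq_smul (hφ k).2) (hu k) (hu l) (hlam.ne hkl)⟩
  refine ⟨OrthonormalBasis.mk hon (hon.linearIndependent.span_eq_top_of_card_eq_finrank' hcard).ge,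
    fun k => ?_⟩
  rw [OrthonormalBasis.coe_mk]
  exact hu k

variable {ι : Type*} [Fintype ι] {lam : ι → ℂ} {b : OrthonormalBasis ι ℂ E}

theorem OrthonormalBasis.pow_apply_eq_sum (hb : ∀ k, W (b k) = lam k • b k) (t : ℕ) (x : E) :
    (W ^ t) x = ∑ k, lam k ^ t • inner ℂ (b k) x • b k := by
  conv_lhs => rw [← b.sum_repr' x]
  simp only [map_sum, map_smul]
  refine sum_congr rfl fun k _ => ?_
  rw [Module.End.HasEigenvector.pow_apply ⟨Module.End.mem_eigenspace_iff.mpr (hb k),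
    b.orthonormal.ne_zero k⟩, smul_comm]

theorem OrthonormalBasis.exists_norm_eq_one_apply_eq_smul_of_commute
    (hW : ∀ x y, inner ℂ (W x) (W y) = inner ℂ x y) (hlam : Function.Injective lam)
    (hb : ∀ k, W (b k) = lam k • b k) (T : E →ₗᵢ[ℂ] E) (hT : ∀ x, W (T x) = T (W x)) (k : ι) :
    ∃ c : ℂ, ‖c‖ = 1 ∧ T (b k) = c • b k := by
  have hTk : W (T (b k)) = lam k • T (b k) := by rw [hT, hb, map_smul]
  have hexp : T (b k) = inner ℂ (b k) (T (b k)) • b k := by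
    conv_lhs => rw [← b.sum_repr' (T (b k))]
    refine sum_eq_single k (fun l _ hlk => ?_) (by simp)
    have hl := norm_eq_one_of_apply_eq_smul hW (hb l) (b.orthonormal.ne_zero l)
    rw [inner_eq_zero_of_apply_eq_smul hW hl (hb l) hTk (hlam.ne hlk), zero_smul]
  refine ⟨_, ?_, hexp⟩
  have h := congr_arg norm hexp
  rwa [norm_smul, T.norm_map, b.orthonormal.1 k, mul_one, eq_comm] at h

end InnerPreserving

theorem Matrix.mulVec_dotProduct_star_mulVec {ι : Type*} [Fintype ι] [DecidableEq ι]
    {C : Matrix ι ι ℂ} (hC : C ∈ unitaryGroup ι ℂ) (x y : ι → ℂ) :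
    C *ᵥ y ⬝ᵥ star (C *ᵥ x) = y ⬝ᵥ star x := by
  rw [dotProduct_comm, star_mulVec, ← dotProduct_mulVec, mulVec_mulVec, ← star_eq_conjTranspose,
    mem_unitaryGroup_iff'.mp hC, one_mulVec, dotProduct_comm]

/-- `α → ℂ` carries the sup norm; the walk is unitary for the inner product of `ℓ²(α)`. -/
noncomputable abbrev euclideanEnd {α : Type*} [Fintype α] :
    Module.End ℂ (α → ℂ) ≃ₐ[ℂ] Module.End ℂ (EuclideanSpace ℂ α) :=
  (WithLp.linearEquiv 2 ℂ (α → ℂ)).symm.conjAlgEquiv ℂ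

theorem euclideanEnd_apply {α : Type*} [Fintype α] (U : Module.End ℂ (α → ℂ))
    (x : EuclideanSpace ℂ α) : euclideanEnd U x = WithLp.toLp 2 (U x.ofLp) :=
  rfl

def coinAt {ι Γ : Type*} (v : Γ) : EuclideanSpace ℂ (ι × Γ) →ₗ[ℂ] EuclideanSpace ℂ ι where
  toFun x := WithLp.toLp 2 fun i => x (i, v)
  map_add' _ _ := rfl
  map_smul' _ _ := rfl

section CoinedWalk

variable {ι Γ : Type*} [Fintype ι] [AddCommGroup Γ]

/-- `U = S · (C ⊗ I)`, with `S` the shift along the labels `s`. -/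
def IsCoinedWalk (C : Matrix ι ι ℂ) (s : ι → Γ) (U : Module.End ℂ (ι × Γ → ℂ)) : Prop :=
  ∀ ψ p, U ψ p = ∑ j, C p.1 j * ψ (j, p.2 - s p.1)

variable {s : ι → Γ} {C : Matrix ι ι ℂ} {U : Module.End ℂ (ι × Γ → ℂ)}

theorem IsCoinedWalk.inner_euclideanEnd [Fintype Γ] [DecidableEq ι] (hU : IsCoinedWalk C s U)
    (hC : C ∈ unitaryGroup ι ℂ) (x y : EuclideanSpace ℂ (ι × Γ)) :
    inner ℂ (euclideanEnd U x) (euclideanEnd U y) = inner ℂ x y := by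
  let atNode (z : EuclideanSpace ℂ (ι × Γ)) (g : Γ) : ι → ℂ := fun j => z (j, g)
  have hcoin : ∀ z p, U z.ofLp p = (C *ᵥ atNode z (p.2 - s p.1)) p.1 := fun z => hU z.ofLp
  calc inner ℂ (euclideanEnd U x) (euclideanEnd U y)
      = ∑ i, ∑ g, (C *ᵥ atNode y (g - s i)) i * star ((C *ᵥ atNode x (g - s i)) i) := by
        simp only [euclideanEnd_apply, EuclideanSpace.inner_toLp_toLp, dotProduct,
          Fintype.sum_prod_type, hcoin, Pi.star_apply]
    _ = ∑ i, ∑ g, (C *ᵥ atNode y g) i * star ((C *ᵥ atNode x g) i) :=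
        sum_congr rfl fun i _ => (Equiv.subRight (s i)).sum_comp
          (fun g => (C *ᵥ atNode y g) i * star ((C *ᵥ atNode x g) i))
    _ = ∑ g, C *ᵥ atNode y g ⬝ᵥ star (C *ᵥ atNode x g) := sum_comm
    _ = ∑ g, atNode y g ⬝ᵥ star (atNode x g) := by
        simp only [Matrix.mulVec_dotProduct_star_mulVec hC]
    _ = inner ℂ x y := by
        simp only [EuclideanSpace.inner_eq_star_dotProduct, dotProduct,
          Fintype.sum_prod_type (f := fun p => y.ofLp p * star x.ofLp p)]
        exact sum_comm

theorem IsCoinedWalk.apply_translate (hU : IsCoinedWalk C s U) (g : Γ) (x : ι × Γ → ℂ) :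
    U (fun p => x (p.1, p.2 + g)) = fun p => U x (p.1, p.2 + g) := by
  funext p
  simp only [hU _, sub_add_eq_add_sub]

theorem IsCoinedWalk.norm_sq_coinAt_orthonormalBasis [Fintype Γ] [DecidableEq ι]
    (hU : IsCoinedWalk C s U) (hC : C ∈ unitaryGroup ι ℂ) {κ : Type*} [Fintype κ] {lam : κ → ℂ}
    (hlam : Function.Injective lam) {b : OrthonormalBasis κ ℂ (EuclideanSpace ℂ (ι × Γ))}
    (hb : ∀ k, euclideanEnd U (b k) = lam k • b k) (k : κ) (v : Γ) :
    ‖coinAt v (b k)‖ ^ 2 = 1 / Fintype.card Γ := by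
  set m : Γ → ℝ := fun u => ‖coinAt u (b k)‖ ^ 2
  have hshift : ∀ u g, m (u + g) = m u := by
    intro u g
    -- `T x (i, h) = x (i, h + g)`
    let T := LinearIsometryEquiv.piLpCongrLeft 2 ℂ ℂ ((Equiv.refl ι).prodCongr (Equiv.subRight g))
    have hT : ∀ x, euclideanEnd U (T x) = T (euclideanEnd U x) := fun x =>
      congrArg (WithLp.toLp 2) (hU.apply_translate g x.ofLp)
    obtain ⟨c, hc, hTb⟩ := b.exists_norm_eq_one_apply_eq_smul_of_commute (hU.inner_euclideanEnd hC)
      hlam hb T.toLinearIsometry hT k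
    have hcoin : coinAt (u + g) (b k) = coinAt u (T (b k)) := rfl
    simp only [m, hcoin]
    rw [show T (b k) = c • b k from hTb, map_smul, norm_smul, hc, one_mul]
  have htotal : ∑ u, m u = 1 := calc
    ∑ u, m u = ∑ u, ∑ i, ‖b k (i, u)‖ ^ 2 := by simp only [m, EuclideanSpace.norm_sq_eq]; rfl
    _ = ‖b k‖ ^ 2 := by rw [EuclideanSpace.norm_sq_eq, Fintype.sum_prod_type_right]
    _ = 1 := by rw [b.orthonormal.1 k, one_pow]
  have hconst : ∑ u, m u = Fintype.card Γ * m v := by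
    rw [← nsmul_eq_mul, ← card_univ, ← sum_const]
    exact sum_congr rfl fun u _ => by rw [← hshift v (u - v), add_sub_cancel]
  exact eq_one_div_of_mul_eq_one_right (hconst ▸ htotal)

end CoinedWalk

theorem cayley_walk_time_averaged_uniform_general
    {Γ : Type*} [Fintype Γ] [AddCommGroup Γ]
    (d : ℕ) (s : Fin d → Γ)
    (C : Matrix (Fin d) (Fin d) ℂ) (hC : C ∈ Matrix.unitaryGroup (Fin d) ℂ)
    (U : ((Fin d × Γ) → ℂ) →ₗ[ℂ] ((Fin d × Γ) → ℂ))
    (hU : ∀ (ψ : (Fin d × Γ) → ℂ) (p : Fin d × Γ),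
      U ψ p = ∑ j : Fin d, C p.1 j * ψ (j, p.2 - s p.1))
    (hdistinct : ∃ lam : Fin (d * Fintype.card Γ) → ℂ,
      Function.Injective lam ∧ ∀ i, Module.End.HasEigenvalue U (lam i))
    (ψ₀ : (Fin d × Γ) → ℂ) (hψ₀ : ∑ p : Fin d × Γ, ‖ψ₀ p‖ ^ 2 = 1) :
    ∀ v : Γ,
      Tendsto (fun T : ℕ =>
          (T : ℝ)⁻¹ * ∑ t ∈ Finset.range T, ∑ i : Fin d, ‖((U ^ t) ψ₀) (i, v)‖ ^ 2)
        atTop (𝓝 (1 / (Fintype.card Γ : ℝ))) := by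
  intro v
  obtain ⟨lam, hlam, heig⟩ := hdistinct
  have hwalk : IsCoinedWalk C s U := hU
  have hW := hwalk.inner_euclideanEnd hC
  have heigW : ∀ k, (euclideanEnd U).HasEigenvalue (lam k) := fun k => by
    rw [Module.End.hasEigenvalue_iff_mem_spectrum, AlgEquiv.spectrum_eq,
      ← Module.End.hasEigenvalue_iff_mem_spectrum]
    exact heig k
  obtain ⟨b, hb⟩ := exists_orthonormalBasis_apply_eq_smul hW hlam heigW (by simp)
  have hnorm : ∀ k, ‖lam k‖ = 1 := fun k =>
    norm_eq_one_of_apply_eq_smul hW (hb k) (b.orthonormal.ne_zero k)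
  let ψ := WithLp.toLp 2 ψ₀
  let w k := coinAt v (inner ℂ (b k) ψ • b k)
  have hprob : ∀ t : ℕ, ∑ i, ‖((U ^ t) ψ₀) (i, v)‖ ^ 2 = ‖∑ k, lam k ^ t • w k‖ ^ 2 := by
    intro t
    have hWt : (euclideanEnd U ^ t) ψ = WithLp.toLp 2 ((U ^ t) ψ₀) := by rw [← map_pow]; rfl
    simp only [w, ← map_smul, ← map_sum, ← b.pow_apply_eq_sum hb, hWt,
      EuclideanSpace.norm_sq_eq]
    rfl
  have hlim : ∑ k, ‖w k‖ ^ 2 = 1 / Fintype.card Γ := by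
    simp only [w, map_smul, norm_smul, mul_pow,
      hwalk.norm_sq_coinAt_orthonormalBasis hC hlam hb, ← sum_mul,
      b.sum_sq_norm_inner_right, EuclideanSpace.norm_sq_eq, ψ, hψ₀, one_mul]
  simpa only [hprob, hlim] using tendsto_cesaro_norm_sq_sum_pow_smul hlam hnorm w

theorem cayley_walk_time_averaged_uniform
    {Γ : Type*} [Fintype Γ] [AddCommGroup Γ]
    (d : ℕ) (hd : 1 ≤ d) (s : Fin d → Γ)
    (C : Matrix (Fin d) (Fin d) ℂ) (hC : C ∈ Matrix.unitaryGroup (Fin d) ℂ)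
    (U : ((Fin d × Γ) → ℂ) →ₗ[ℂ] ((Fin d × Γ) → ℂ))
    (hU : ∀ (ψ : (Fin d × Γ) → ℂ) (p : Fin d × Γ),
      U ψ p = ∑ j : Fin d, C p.1 j * ψ (j, p.2 - s p.1))
    (hdistinct : ∃ lam : Fin (d * Fintype.card Γ) → ℂ,
      Function.Injective lam ∧ ∀ i, Module.End.HasEigenvalue U (lam i))
    (ψ₀ : (Fin d × Γ) → ℂ) (hψ₀ : ∑ p : Fin d × Γ, ‖ψ₀ p‖ ^ 2 = 1) :
    ∀ v : Γ,
      Tendsto (fun T : ℕ =>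
          (T : ℝ)⁻¹ * ∑ t ∈ Finset.range T, ∑ i : Fin d, ‖((U ^ t) ψ₀) (i, v)‖ ^ 2)
        atTop (𝓝 (1 / (Fintype.card Γ : ℝ))) :=
  cayley_walk_time_averaged_uniform_general d s C hC U hU hdistinct ψ₀ hψ₀
end

section
/- (Meyer's no-go theorem for coinless homogeneous quantum walks on ℤ.) Let a, b, c ∈ ℂ and consider the translation-invariant nearest-neighbor evolution sending ψ : ℤ → ℂ to ψ' with ψ'(n) = a·ψ(n+1) + b·ψ(n) + c·ψ(n−1). If this evolution preserves the ℓ² norm, i.e. Σ_{n∈ℤ} |ψ'(n)|² = Σ_{n∈ℤ} |ψ(n)|² for every finitely supported ψ : ℤ → ℂ, then exactly one of a, b, c is nonzero and it has modulus 1; that is, either (|a| = 1 and b = c = 0), or (|b| = 1 and a = c = 0), or (|c| = 1 and a = b = 0). In particular, a quantum particle moving at each step in superposition both to the left and to the right with nonzero amplitudes is impossible: the only unitary homogeneous scalar evolutions are trivial motions in a single direction (or standing still) up to a phase. -/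
/-!
Test the evolution on the states `δ₀ + t δₖ` for `k = 1, 2`. Norm preservation on `δ₀` gives
`‖a‖² + ‖b‖² + ‖c‖² = 1`, and on `δ₀ + t δₖ` it gives `Re (conj t · Gₖ) = 0` for every `t`,
where `Gₖ` is the inner product of the images of `δ₀` and `δₖ`; taking `t = Gₖ`
forces `G₁ = b ā + c b̄ = 0` and `G₂ = c ā = 0`. The second relation kills `a` or `c`, the
first then kills one more coefficient, and the remaining one is a unit.
-/

open ComplexConjugate

def walk (a b c : ℂ) (ψ : ℤ → ℂ) (n : ℤ) : ℂ := a * ψ (n + 1) + b * ψ n + c * ψ (n - 1)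

def twoPointState (k : ℤ) (t : ℂ) (n : ℤ) : ℂ := if n = 0 then 1 else if n = k then t else 0

section TwoPointState

variable {k : ℤ} {t : ℂ}

lemma support_twoPointState_subset :
    Function.support (twoPointState k t) ⊆ ({0, k} : Finset ℤ) := by
  intro n hn
  simp only [twoPointState, Function.mem_support, ne_eq] at hn
  simp only [Finset.coe_insert, Finset.coe_singleton, Set.mem_insert_iff, Set.mem_singleton_iff]
  split_ifs at hn <;> simp_all

lemma finite_support_twoPointState : (Function.support (twoPointState k t)).Finite :=
  (Finset.finite_toSet _).subset support_twoPointState_subset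

lemma tsum_sq_norm_twoPointState (hk : k ≠ 0) :
    ∑' n, ‖twoPointState k t n‖ ^ 2 = 1 + ‖t‖ ^ 2 := by
  rw [tsum_eq_sum (s := {0, k}) fun n hn => by
    rw [Function.notMem_support.mp fun h => hn (support_twoPointState_subset h), norm_zero,
      zero_pow two_ne_zero]]
  simp [Finset.sum_pair hk.symm, twoPointState, hk]

variable (a b c : ℂ)

lemma walk_twoPointState_eq_zero (hk : 0 ≤ k) {n : ℤ} (hn : n ∉ Finset.Icc (-1) (k + 1)) :
    walk a b c (twoPointState k t) n = 0 := by
  rw [Finset.mem_Icc] at hn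
  have : n + 1 ≠ 0 ∧ n + 1 ≠ k ∧ n ≠ 0 ∧ n ≠ k ∧ n - 1 ≠ 0 ∧ n - 1 ≠ k := by omega
  simp [walk, twoPointState, this]

lemma tsum_sq_norm_walk_twoPointState_eq_sum (hk : 0 ≤ k) :
    ∑' n, ‖walk a b c (twoPointState k t) n‖ ^ 2 =
      ∑ n ∈ Finset.Icc (-1) (k + 1), ‖walk a b c (twoPointState k t) n‖ ^ 2 :=
  tsum_eq_sum fun n hn => by simp [walk_twoPointState_eq_zero a b c hk hn]

lemma tsum_sq_norm_walk_twoPointState_one :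
    ∑' n, ‖walk a b c (twoPointState 1 t) n‖ ^ 2 =
      ‖a‖ ^ 2 + ‖a * t + b‖ ^ 2 + ‖b * t + c‖ ^ 2 + ‖c * t‖ ^ 2 := by
  rw [tsum_sq_norm_walk_twoPointState_eq_sum a b c zero_le_one,
    show Finset.Icc (-1 : ℤ) (1 + 1) = {-1, 0, 1, 2} by decide]
  simp [walk, twoPointState]
  ring_nf

lemma tsum_sq_norm_walk_twoPointState_two :
    ∑' n, ‖walk a b c (twoPointState 2 t) n‖ ^ 2 =
      ‖a‖ ^ 2 + ‖b‖ ^ 2 + ‖a * t + c‖ ^ 2 + ‖b * t‖ ^ 2 + ‖c * t‖ ^ 2 := by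
  rw [tsum_sq_norm_walk_twoPointState_eq_sum a b c zero_le_two,
    show Finset.Icc (-1 : ℤ) (2 + 1) = {-1, 0, 1, 2, 3} by decide]
  simp [walk, twoPointState]
  ring_nf

end TwoPointState

namespace Complex

lemma sq_norm_mul_add (x y t : ℂ) :
    ‖x * t + y‖ ^ 2 = ‖x‖ ^ 2 * ‖t‖ ^ 2 + ‖y‖ ^ 2 + 2 * (conj t * (y * conj x)).re := by
  rw [← conj_re (conj t * _)]
  simp only [Complex.sq_norm, normSq_add, map_mul, conj_conj]
  ring_nf

lemma eq_zero_of_forall_re_conj_mul_eq_zero {z : ℂ} (h : ∀ t : ℂ, (conj t * z).re = 0) :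
    z = 0 := by
  have hz := h z
  rw [mul_comm, mul_conj, ofReal_re] at hz
  exact normSq_eq_zero.mp hz

end Complex

section Orthogonality

variable {a b c : ℂ}

lemma cross_term_one_eq_zero (hE : ‖a‖ ^ 2 + ‖b‖ ^ 2 + ‖c‖ ^ 2 = 1)
    (h : ∀ t : ℂ, ‖a‖ ^ 2 + ‖a * t + b‖ ^ 2 + ‖b * t + c‖ ^ 2 + ‖c * t‖ ^ 2 = 1 + ‖t‖ ^ 2) :
    b * conj a + c * conj b = 0 := by
  refine Complex.eq_zero_of_forall_re_conj_mul_eq_zero fun t => ?_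
  have ht := h t
  rw [Complex.sq_norm_mul_add, Complex.sq_norm_mul_add, norm_mul] at ht
  rw [mul_add, Complex.add_re]
  linear_combination (ht - (1 + ‖t‖ ^ 2) * hE) / 2

lemma cross_term_two_eq_zero (hE : ‖a‖ ^ 2 + ‖b‖ ^ 2 + ‖c‖ ^ 2 = 1)
    (h : ∀ t : ℂ, ‖a‖ ^ 2 + ‖b‖ ^ 2 + ‖a * t + c‖ ^ 2 + ‖b * t‖ ^ 2 + ‖c * t‖ ^ 2 = 1 + ‖t‖ ^ 2) :
    c * conj a = 0 := by
  refine Complex.eq_zero_of_forall_re_conj_mul_eq_zero fun t => ?_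
  have ht := h t
  rw [Complex.sq_norm_mul_add, norm_mul, norm_mul] at ht
  linear_combination (ht - (1 + ‖t‖ ^ 2) * hE) / 2

lemma single_unit_of_orthonormal (hE : ‖a‖ ^ 2 + ‖b‖ ^ 2 + ‖c‖ ^ 2 = 1)
    (h₁ : b * conj a + c * conj b = 0) (h₂ : c * conj a = 0) :
    (‖a‖ = 1 ∧ b = 0 ∧ c = 0) ∨ (‖b‖ = 1 ∧ a = 0 ∧ c = 0) ∨ (‖c‖ = 1 ∧ a = 0 ∧ b = 0) := by
  have unit : ∀ x : ℂ, ‖x‖ ^ 2 = 1 → ‖x‖ = 1 := fun x hx =>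
    (pow_eq_one_iff_of_nonneg (norm_nonneg x) two_ne_zero).mp hx
  rcases mul_eq_zero.mp h₂ with rfl | ha
  · simp only [zero_mul, add_zero, mul_eq_zero, map_eq_zero] at h₁
    rcases h₁ with rfl | rfl
    · exact Or.inl ⟨unit _ (by simpa using hE), rfl, rfl⟩
    · exact Or.inr (Or.inl ⟨unit _ (by simpa using hE), rfl, rfl⟩)
  · obtain rfl : a = 0 := by simpa using ha
    simp only [map_zero, mul_zero, zero_add, mul_eq_zero, map_eq_zero] at h₁
    rcases h₁ with rfl | rfl
    · exact Or.inr (Or.inl ⟨unit _ (by simpa using hE), rfl, rfl⟩)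
    · exact Or.inr (Or.inr ⟨unit _ (by simpa using hE), rfl, rfl⟩)

end Orthogonality

theorem meyer_no_go
    (a b c : ℂ)
    (hnorm : ∀ ψ : ℤ → ℂ, (Function.support ψ).Finite →
      (∑' n : ℤ, ‖a * ψ (n + 1) + b * ψ n + c * ψ (n - 1)‖ ^ 2) = ∑' n : ℤ, ‖ψ n‖ ^ 2) :
    (‖a‖ = 1 ∧ b = 0 ∧ c = 0) ∨ (‖b‖ = 1 ∧ a = 0 ∧ c = 0) ∨
      (‖c‖ = 1 ∧ a = 0 ∧ b = 0) := by
  have preserved (k : ℤ) (hk : k ≠ 0) (t : ℂ) :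
      ∑' n, ‖walk a b c (twoPointState k t) n‖ ^ 2 = 1 + ‖t‖ ^ 2 :=
    (hnorm _ finite_support_twoPointState).trans (tsum_sq_norm_twoPointState hk)
  have hE : ‖a‖ ^ 2 + ‖b‖ ^ 2 + ‖c‖ ^ 2 = 1 := by
    simpa [tsum_sq_norm_walk_twoPointState_one] using preserved 1 one_ne_zero 0
  refine single_unit_of_orthonormal hE (cross_term_one_eq_zero hE fun t => ?_)
    (cross_term_two_eq_zero hE fun t => ?_)
  · rw [← tsum_sq_norm_walk_twoPointState_one]
    exact preserved 1 one_ne_zero t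
  · rw [← tsum_sq_norm_walk_twoPointState_two]
    exact preserved 2 two_ne_zero t
end
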